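/- With the bit-reversal eviction schedule, each node at depth i of the complete binary tree with 2^L leaves lies on the eviction path exactly once in every 2^i consecutive evictions: for any depth i ≤ L and any length-i bit string p, among any 2^i consecutive values G, G+1, ..., G+2^i−1, exactly one value G' satisfies that the length-i prefix of BitReversal(G' mod 2^L) equals p. -/

import Mathlib

/-!
The length-`i` prefix of `bitReversal L x` is `bitReversal i x`, which only depends on `x % 2 ^ i`.
Reduction mod `2 ^ i` maps any `2 ^ i` consecutive integers bijectively onto `[0, 2 ^ i)`, and
`bitReversal i` permutes `[0, 2 ^ i)`; so their composite hits each prefix `p` exactly once.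
-/

/-- Reversal of the `L` low-order bits of `x`. -/
def bitReversal (L x : ℕ) : ℕ :=
  ∑ i ∈ Finset.range L, (x / 2 ^ i % 2) * 2 ^ (L - 1 - i)

theorem Set.BijOn.existsUnique {α β : Type*} {f : α → β} {s : Set α} {t : Set β}
    (h : Set.BijOn f s t) {b : β} (hb : b ∈ t) : ∃! a, a ∈ s ∧ f a = b := by
  obtain ⟨a, ha, rfl⟩ := h.surjOn hb
  exact ⟨a, ⟨ha, rfl⟩, fun a' ⟨ha', he⟩ => h.injOn ha' ha he⟩

theorem Nat.bijOn_mod_Ico (G n : ℕ) :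
    Set.BijOn (· % n) (Finset.Ico G (G + n) : Set ℕ) (Finset.range n : Set ℕ) := by
  have h := (Nat.mod_injOn_Ico G n).bijOn_image
  rwa [← Finset.coe_image, Nat.image_Ico_mod] at h

theorem bitReversal_add (i m x : ℕ) :
    bitReversal (i + m) x = bitReversal i x * 2 ^ m + bitReversal m (x / 2 ^ i) := by
  simp only [bitReversal, Finset.sum_range_add, Finset.sum_mul]
  congr 1
  · refine Finset.sum_congr rfl fun j hj => ?_
    rw [mul_assoc, ← pow_add]
    congr 2
    have := Finset.mem_range.mp hj
    omega
  · refine Finset.sum_congr rfl fun j _ => ?_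
    rw [pow_add, Nat.div_div_eq_div_mul]
    congr 2
    omega

theorem bitReversal_one (x : ℕ) : bitReversal 1 x = x % 2 := by
  simp [bitReversal]

theorem bitReversal_lt (n x : ℕ) : bitReversal n x < 2 ^ n := by
  induction n generalizing x with
  | zero => simp [bitReversal]
  | succ n ih =>
    rw [Nat.add_comm, bitReversal_add, bitReversal_one, pow_add]
    have := ih (x / 2 ^ 1)
    have := Nat.mod_lt x two_pos
    nlinarith

theorem bitReversal_div_two_pow {i L : ℕ} (h : i ≤ L) (x : ℕ) :
    bitReversal L x / 2 ^ (L - i) = bitReversal i x := by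
  obtain ⟨m, rfl⟩ := Nat.exists_eq_add_of_le h
  rw [bitReversal_add, Nat.add_sub_cancel_left, add_comm, Nat.add_mul_div_right _ _ (by positivity),
    Nat.div_eq_of_lt (bitReversal_lt _ _), zero_add]

theorem bitReversal_mod_two_pow {i k : ℕ} (h : i ≤ k) (x : ℕ) :
    bitReversal i (x % 2 ^ k) = bitReversal i x := by
  refine Finset.sum_congr rfl fun j hj => ?_
  have hjk : j < k := (Finset.mem_range.mp hj).trans_le h
  simp [← Nat.toNat_testBit, hjk]

theorem bitReversal_injOn (n : ℕ) :
    Set.InjOn (bitReversal n) (Finset.range (2 ^ n) : Set ℕ) := by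
  induction n with
  | zero =>
    intro x hx y hy _
    simp_all
  | succ n ih =>
    intro x hx y hy h
    simp only [Finset.coe_range, Set.mem_Iio, pow_succ] at hx hy
    have hlow : bitReversal 1 x = bitReversal 1 y := by
      have h1 := Nat.le_add_left 1 n
      rw [← bitReversal_div_two_pow h1, h, bitReversal_div_two_pow h1]
    rw [Nat.add_comm n 1, bitReversal_add, bitReversal_add, hlow] at h
    have hhigh : x / 2 = y / 2 :=
      ih (Finset.mem_range.mpr (by omega)) (Finset.mem_range.mpr (by omega)) (Nat.add_left_cancel h)
    rw [bitReversal_one, bitReversal_one] at hlow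
    omega

theorem bitReversal_bijOn (n : ℕ) :
    Set.BijOn (bitReversal n) (Finset.range (2 ^ n) : Set ℕ)
      (Finset.range (2 ^ n) : Set ℕ) := by
  refine ((Finset.finite_toSet _).injOn_iff_bijOn_of_mapsTo fun x _ => ?_).mp (bitReversal_injOn n)
  exact Finset.mem_range.mpr (bitReversal_lt n x)

/-- Bit-reversal eviction schedule: each depth-`i` node (identified with the
length-`i` prefix `p < 2^i` of a leaf's `L`-bit representation) lies on the
eviction path exactly once among any `2^i` consecutive eviction counters
`G, G+1, …, G+2^i−1`: exactly one `G'` in that window satisfies that the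
length-`i` prefix of `BitReversal(G' mod 2^L)` equals `p`. -/
theorem bitReversal_eviction_schedule (L i p G : ℕ) (hi : i ≤ L)
    (hp : p < 2 ^ i) :
    ∃! G' : ℕ, G' ∈ Finset.Ico G (G + 2 ^ i) ∧
      bitReversal L (G' % 2 ^ L) / 2 ^ (L - i) = p := by
  have hprefix (G' : ℕ) :
      bitReversal L (G' % 2 ^ L) / 2 ^ (L - i) = bitReversal i (G' % 2 ^ i) := by
    rw [bitReversal_div_two_pow hi, bitReversal_mod_two_pow hi, bitReversal_mod_two_pow le_rfl]
  simp only [hprefix]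
  exact ((bitReversal_bijOn i).comp (Nat.bijOn_mod_Ico G (2 ^ i))).existsUnique
    (Finset.mem_coe.mpr (Finset.mem_range.mpr hp))
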